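/- Let S, T be trees. For every e = (s,t) ∈ S ⊗ T there exists a minimum tuple e^λ ∈ (S×T)⁺ with e^λ ≤ e, and it satisfies e^λ = s^λ × t^λ, where s^λ and t^λ are the minimal tuples below s in S and below t in T, respectively (consisting of the leaves that are descendants). -/

import Mathlib

universe u

namespace BroadPaper

/-- A broad relation on `X`: a relation between finite unordered tuples
(multisets) over `X` and elements of `X`. -/
abbrev Rel (X : Type u) : Type u := Multiset X → X → Prop

variable {X : Type u} {Y : Type u} {A : Type u} {B : Type u} {Z : Type u}

/-- Broad transitivity: if `f₁ ⋯ fₙ ≤ e` and `g̲ᵢ ≤ fᵢ` then `g̲₁ ⋯ g̲ₙ ≤ e`,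
encoded via a multiset of pairs `(g̲ᵢ, fᵢ)`. -/
def BTrans (r : Rel X) : Prop :=
  ∀ (p : Multiset (Multiset X × X)) (e : X),
    r (p.map Prod.snd) e → (∀ q ∈ p, r q.1 q.2) → r ((p.map Prod.fst).sum) e

/-- A pre-broad poset: reflexivity plus broad transitivity. -/
def IsPreBroad (r : Rel X) : Prop := (∀ e : X, r {e} e) ∧ BTrans r

/-- A (commutative) broad poset: a pre-broad poset satisfying antisymmetry. -/
def IsBroad (r : Rel X) : Prop :=
  IsPreBroad r ∧ ∀ e f : X, r {e} f → r {f} e → e = f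

/-- Simplicity: letters in any broad relation are pairwise distinct. -/
def Simple (r : Rel X) : Prop := ∀ fs e, r fs e → fs.Nodup

/-- The descendant relation `f ≤_d e`. -/
def descends (r : Rel X) (f e : X) : Prop := ∃ fs, r fs e ∧ f ∈ fs

def Comparable (r : Rel X) (f g : X) : Prop := descends r f g ∨ descends r g f

def Incomp (r : Rel X) (f g : X) : Prop := ¬ descends r f g ∧ ¬ descends r g f

/-- Blockwise extension of a broad relation to a relation between tuples:
`fs ≤ es` iff `fs = f̲₁ ⋯ f̲ₖ`, `es = e₁ ⋯ eₖ` with `f̲ᵢ ≤ eᵢ`. -/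
def tupleLE (r : Rel X) (fs es : Multiset X) : Prop :=
  ∃ p : Multiset (Multiset X × X),
    p.map Prod.snd = es ∧ (p.map Prod.fst).sum = fs ∧ ∀ q ∈ p, r q.1 q.2

/-- A leaf: no tuple strictly below `e`. -/
def IsLeaf (r : Rel X) (e : X) : Prop := ¬ ∃ fs, r fs e ∧ fs ≠ ({e} : Multiset X)

/-- `fs` is the maximum tuple strictly below `e` (written `e^↑`).
If `fs ≠ 0`, `e` is a node; if `fs = 0`, `e` is a stump. -/
def upTuple (r : Rel X) (e : X) (fs : Multiset X) : Prop :=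
  (r fs e ∧ fs ≠ ({e} : Multiset X)) ∧
    ∀ gs, r gs e → gs ≠ ({e} : Multiset X) → tupleLE r gs fs

def IsStump (r : Rel X) (e : X) : Prop := upTuple r e 0

/-- A dendroidally ordered set (tree): a finite simple broad poset in which
every element is a leaf, node or stump, with a `≤_d`-maximum (root). -/
def IsTree (r : Rel X) : Prop :=
  IsBroad r ∧ Finite X ∧ Simple r ∧
    (∀ e : X, IsLeaf r e ∨ ∃ fs, upTuple r e fs) ∧
    ∃ rt : X, ∀ e, descends r e rt

def IsMaxEl (r : Rel X) (e : X) : Prop := ∀ s, descends r e s → s = e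

/-- A forestially ordered set (forest): each element has a unique
`≤_d`-maximal element above it. -/
def IsForest (r : Rel X) : Prop :=
  IsBroad r ∧ Finite X ∧ Simple r ∧
    (∀ e : X, IsLeaf r e ∨ ∃ fs, upTuple r e fs) ∧
    ∀ e : X, ∃! rt : X, IsMaxEl r rt ∧ descends r e rt

/-- A map of broad posets: preserves broad relations (letterwise on tuples). -/
def BroadHom (r : Rel X) (r' : Rel Y) (φ : X → Y) : Prop :=
  ∀ fs e, r fs e → r' (fs.map φ) (φ e)

/-- `rs` is the root tuple: the tuple of `≤_d`-maximal elements (no repeats). -/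
def IsRootTuple (r : Rel X) (rs : Multiset X) : Prop :=
  rs.Nodup ∧ ∀ x, x ∈ rs ↔ IsMaxEl r x

/-- Independent map of forests: `φ(r̲_F)·e̲ ≤ r̲_{F'}` for some tuple `e̲`. -/
def Independent (r : Rel X) (r' : Rel Y) (φ : X → Y) : Prop :=
  ∃ (rs : Multiset X) (rs' : Multiset Y) (es : Multiset Y),
    IsRootTuple r rs ∧ IsRootTuple r' rs' ∧ tupleLE r' (rs.map φ + es) rs'

/-- The (pre-)broad relation generated by a set of generating relations:
closure under reflexivity and broad transitivity. -/
inductive GenRel (gen : Rel X) : Rel X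
  | of : ∀ fs e, gen fs e → GenRel gen fs e
  | refl : ∀ e, GenRel gen {e} e
  | btrans : ∀ (p : Multiset (Multiset X × X)) (e : X),
      GenRel gen (p.map Prod.snd) e → (∀ q ∈ p, GenRel gen q.1 q.2) →
      GenRel gen ((p.map Prod.fst).sum) e

/-- Generators of the tensor product `S ⊗ T`: relations `s̲ × t ≤ (s,t)` and
`s × t̲ ≤ (s,t)`. -/
def tensorGen (rS : Rel A) (rT : Rel B) : Rel (A × B) := fun xs x =>
  (∃ as, rS as x.1 ∧ xs = as.map fun a => (a, x.2)) ∨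
  (∃ bs, rT bs x.2 ∧ xs = bs.map fun b => (x.1, b))

/-- The tensor product broad relation on `A × B`. -/
def tensorRel (rS : Rel A) (rT : Rel B) : Rel (A × B) := GenRel (tensorGen rS rT)

/-- Product of tuples: all pairs from `as` and `bs`. -/
def mprod (as : Multiset A) (bs : Multiset B) : Multiset (A × B) :=
  as.bind fun a => bs.map fun b => (a, b)

end BroadPaper

/-!
In a tree every element `a` has a minimum tuple `a^λ` of leaves below it, built by well-founded
induction along the strict descendant order: `a^λ = {a}` for a leaf, and `a^λ` is the
concatenation of the `f^λ` over `f ∈ a^↑` otherwise. Minimality makes `λ` additive along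
relations: `fs ≤ e` forces `Σ_{f ∈ fs} f^λ = e^λ`, since the left side lies below `e` and
consists of leaves. Hence the weight `(a, b) ↦ a^λ × b^λ` is additive along the generators of
`S ⊗ T`, and so along every relation `gs ≤ (s, t)` of the tensor product. Such a relation is
therefore refined blockwise by `s^λ × t^λ = Σ_{(a,b) ∈ gs} a^λ × b^λ`, each block
`a^λ × b^λ ≤ (a, b)` being a composite of generators.
-/

namespace BroadPaper

section Tuples

variable {X : Type u} {r : Rel X}

lemma IsLeaf.eq_singleton {e : X} {fs : Multiset X} (hl : IsLeaf r e) (h : r fs e) :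
    fs = {e} :=
  not_not.mp fun hne => hl ⟨fs, h, hne⟩

lemma tupleLE_singleton {fs : Multiset X} {e : X} (h : r fs e) : tupleLE r fs {e} :=
  ⟨{(fs, e)}, by simp, by simp, by simpa using h⟩

lemma tupleLE_sum {ι : Type*} (s : Multiset ι) {f g : ι → Multiset X}
    (h : ∀ i ∈ s, tupleLE r (f i) (g i)) : tupleLE r (s.map f).sum (s.map g).sum := by
  induction s using Multiset.induction with
  | empty => exact ⟨0, by simp, by simp, by simp⟩
  | cons i s ih =>
    obtain ⟨p, hsnd, hfst, hp⟩ := h i (Multiset.mem_cons_self i s)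
    obtain ⟨p', hsnd', hfst', hp'⟩ := ih fun j hj => h j (Multiset.mem_cons_of_mem hj)
    exact ⟨p + p', by simp [hsnd, hsnd'], by simp [hfst, hfst'],
      fun q hq => (Multiset.mem_add.mp hq).elim (hp q) (hp' q)⟩

lemma tupleLE_sum_map_self {es : Multiset X} {φ : X → Multiset X}
    (h : ∀ e ∈ es, r (φ e) e) : tupleLE r (es.map φ).sum es := by
  simpa using tupleLE_sum es fun e he => tupleLE_singleton (h e he)

lemma tupleLE.sum_map_le {fs es : Multiset X} {φ : X → Multiset X} (h : tupleLE r fs es)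
    (hφ : ∀ e ∈ es, ∀ gs, r gs e → tupleLE r (φ e) gs) : tupleLE r (es.map φ).sum fs := by
  obtain ⟨p, rfl, rfl, hp⟩ := h
  rw [Multiset.map_map]
  exact tupleLE_sum p fun q hq => hφ q.2 (Multiset.mem_map_of_mem _ hq) q.1 (hp q hq)

lemma tupleLE_eq_of_isLeaf {fs es : Multiset X} (h : tupleLE r fs es)
    (hes : ∀ e ∈ es, IsLeaf r e) : fs = es := by
  obtain ⟨p, rfl, rfl, hp⟩ := h
  have hblock : ∀ q ∈ p, q.1 = {q.2} := fun q hq =>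
    (hes q.2 (Multiset.mem_map_of_mem _ hq)).eq_singleton (hp q hq)
  rw [Multiset.map_congr rfl hblock, ← Multiset.sum_map_singleton (p.map Prod.snd),
    Multiset.map_map]
  rfl

end Tuples

section PreBroad

variable {X : Type u} {r : Rel X}

lemma BTrans.rel_sum_map (h : BTrans r) {fs : Multiset X} {e : X} {φ : X → Multiset X}
    (hfs : r fs e) (hφ : ∀ f ∈ fs, r (φ f) f) : r (fs.map φ).sum e := by
  simpa [Multiset.map_map] using
    h (fs.map fun f => (φ f, f)) e (by simpa [Multiset.map_map] using hfs) (by simpa using hφ)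

lemma IsPreBroad.rel_subst (h : IsPreBroad r) {fs gs : Multiset X} {e f : X}
    (hfs : r (f ::ₘ fs) e) (hgs : r gs f) : r (gs + fs) e := by
  simpa [Multiset.map_map, Function.comp_def] using
    h.2 ((gs, f) ::ₘ fs.map fun x => ({x}, x)) e
      (by simpa [Multiset.map_map, Function.comp_def] using hfs) (by simp [hgs, h.1])

lemma IsPreBroad.eq_singleton_of_mem (h : IsPreBroad r) (hs : Simple r) {fs : Multiset X}
    {e : X} (hfs : r fs e) (he : e ∈ fs) : fs = {e} := by
  obtain ⟨fs, rfl⟩ := Multiset.exists_cons_of_mem he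
  -- substituting `fs ≤ e` into itself duplicates every letter of `fs` other than `e`
  have hnodup := hs _ _ (h.rel_subst hfs hfs)
  rw [Multiset.cons_add, Multiset.nodup_cons, Multiset.nodup_add] at hnodup
  rw [disjoint_self.mp hnodup.2.2.2]
  rfl

lemma IsPreBroad.descends_trans (h : IsPreBroad r) {f g e : X} (hfg : descends r f g)
    (hge : descends r g e) : descends r f e := by
  obtain ⟨fs, hfs, hf⟩ := hfg
  obtain ⟨gs, hgs, hg⟩ := hge
  obtain ⟨gs, rfl⟩ := Multiset.exists_cons_of_mem hg
  exact ⟨fs + gs, h.rel_subst hgs hfs, Multiset.mem_add.mpr (Or.inl hf)⟩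

lemma IsBroad.descends_antisymm (h : IsBroad r) (hs : Simple r) {f g : X}
    (hfg : descends r f g) (hgf : descends r g f) : f = g := by
  obtain ⟨fs, hfs, hf⟩ := hfg
  obtain ⟨gs, hgs, hg⟩ := hgf
  obtain ⟨fs, rfl⟩ := Multiset.exists_cons_of_mem hf
  obtain ⟨gs, rfl⟩ := Multiset.exists_cons_of_mem hg
  have hsingle := h.1.eq_singleton_of_mem hs (h.1.rel_subst hfs hgs)
    (Multiset.mem_add.mpr (Or.inl (Multiset.mem_cons_self g gs)))
  rw [Multiset.cons_add, ← Multiset.cons_zero, Multiset.cons_inj_right, add_eq_zero] at hsingle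
  obtain ⟨rfl, rfl⟩ := hsingle
  exact h.2 f g hfs hgs

end PreBroad

section Tree

variable {X : Type u} {r : Rel X}

def StrictDescends (r : Rel X) (f e : X) : Prop := descends r f e ∧ f ≠ e

lemma IsTree.wellFounded_strictDescends (h : IsTree r) : WellFounded (StrictDescends r) := by
  obtain ⟨hbroad, hfin, hs, -, -⟩ := h
  have : IsTrans X (StrictDescends r) := ⟨fun _ _ _ ⟨hfg, _⟩ ⟨hge, hne⟩ =>
    ⟨hbroad.1.descends_trans hfg hge,
      by rintro rfl; exact hne (hbroad.descends_antisymm hs hge hfg)⟩⟩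
  have : Std.Irrefl (StrictDescends r) := ⟨fun _ h => h.2 rfl⟩
  exact Finite.wellFounded_of_trans_of_irrefl _

lemma IsPreBroad.strictDescends_of_mem (h : IsPreBroad r) (hs : Simple r) {fs : Multiset X}
    {e f : X} (hfs : r fs e) (hne : fs ≠ {e}) (hf : f ∈ fs) : StrictDescends r f e :=
  ⟨⟨fs, hfs, hf⟩, by rintro rfl; exact hne (h.eq_singleton_of_mem hs hfs hf)⟩

/-- `l` is the tuple `a^λ`: the minimum tuple below `a`, made of leaves. -/
def IsMinLeafTuple (r : Rel X) (l : Multiset X) (a : X) : Prop :=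
  r l a ∧ (∀ gs, r gs a → tupleLE r l gs) ∧ ∀ x ∈ l, IsLeaf r x

lemma isLeaf_of_mem_sum_map {fs : Multiset X} {lam : X → Multiset X}
    (hlam : ∀ f ∈ fs, ∀ x ∈ lam f, IsLeaf r x) : ∀ x ∈ (fs.map lam).sum, IsLeaf r x := by
  intro x hx
  obtain ⟨l, hl, hx⟩ := Multiset.mem_join.mp hx
  obtain ⟨f, hf, rfl⟩ := Multiset.mem_map.mp hl
  exact hlam f hf x hx

lemma IsTree.exists_isMinLeafTuple (h : IsTree r) (a : X) : ∃ l, IsMinLeafTuple r l a := by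
  have hwf := h.wellFounded_strictDescends
  obtain ⟨⟨hpre, -⟩, -, hs, hcases, -⟩ := h
  induction a using hwf.induction with
  | _ a IH =>
  rcases hcases a with hleaf | ⟨fs, ⟨hfs, hne⟩, hmax⟩
  · refine ⟨{a}, hpre.1 a, fun gs hgs => ?_, by simpa using hleaf⟩
    rw [hleaf.eq_singleton hgs]
    exact tupleLE_singleton (hpre.1 a)
  · choose! lam hlam using fun f (hf : f ∈ fs) => IH f (hpre.strictDescends_of_mem hs hfs hne hf)
    have hrel : r (fs.map lam).sum a := hpre.2.rel_sum_map hfs fun f hf => (hlam f hf).1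
    refine ⟨(fs.map lam).sum, hrel, fun gs hgs => ?_,
      isLeaf_of_mem_sum_map fun f hf => (hlam f hf).2.2⟩
    by_cases hgs' : gs = {a}
    · rw [hgs']
      exact tupleLE_singleton hrel
    · exact (hmax gs hgs hgs').sum_map_le fun f hf => (hlam f hf).2.1

lemma BTrans.sum_map_minLeafTuple (h : BTrans r) {lam : X → Multiset X}
    (hlam : ∀ a, IsMinLeafTuple r (lam a) a) {fs : Multiset X} {e : X} (hfs : r fs e) :
    (fs.map lam).sum = lam e :=
  (tupleLE_eq_of_isLeaf ((hlam e).2.1 _ (h.rel_sum_map hfs fun f _ => (hlam f).1))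
    (isLeaf_of_mem_sum_map fun f _ => (hlam f).2.2)).symm

end Tree

section Tensor

variable {X A B : Type u}

lemma GenRel.bTrans (gen : Rel X) : BTrans (GenRel gen) := GenRel.btrans

lemma GenRel.sum_map_eq {M : Type*} [AddCommMonoid M] {gen : Rel X} {φ : X → M}
    (hgen : ∀ fs e, gen fs e → (fs.map φ).sum = φ e) {fs : Multiset X} {e : X}
    (h : GenRel gen fs e) : (fs.map φ).sum = φ e := by
  induction h with
  | of fs e hg => exact hgen fs e hg
  | refl e => simp
  | btrans p e _ _ ih ih' =>
    rw [← ih, Multiset.map_map]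
    show ((Multiset.join _).map φ).sum = _
    rw [Multiset.map_join, Multiset.sum_join, Multiset.map_map, Multiset.map_map]
    exact congrArg Multiset.sum (Multiset.map_congr rfl ih')

-- `mprod as bs` is definitionally `as ×ˢ bs`.
lemma mprod_sum_map_left {ι : Type*} (s : Multiset ι) (f : ι → Multiset A) (bs : Multiset B) :
    mprod (s.map f).sum bs = (s.map fun i => mprod (f i) bs).sum := by
  induction s using Multiset.induction with
  | empty => rfl
  | cons i s ih =>
    rw [Multiset.map_cons, Multiset.sum_cons, Multiset.map_cons, Multiset.sum_cons, ← ih]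
    exact Multiset.add_product _ _ _

lemma mprod_sum_map_right {ι : Type*} (as : Multiset A) (s : Multiset ι) (f : ι → Multiset B) :
    mprod as (s.map f).sum = (s.map fun i => mprod as (f i)).sum := by
  induction s using Multiset.induction with
  | empty => exact Multiset.product_zero as
  | cons i s ih =>
    rw [Multiset.map_cons, Multiset.sum_cons, Multiset.map_cons, Multiset.sum_cons, ← ih]
    exact Multiset.product_add _ _ _

variable {rS : Rel A} {rT : Rel B}

lemma tensorRel_mprod {as : Multiset A} {a : A} {bs : Multiset B} {b : B} (ha : rS as a)
    (hb : rT bs b) : tensorRel rS rT (mprod as bs) (a, b) := by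
  have hrel := (GenRel.bTrans (tensorGen rS rT)).rel_sum_map
    (φ := fun x => bs.map fun y => (x.1, y)) (GenRel.of _ (a, b) (Or.inl ⟨as, ha, rfl⟩))
    fun x hx => by
      obtain ⟨x, -, rfl⟩ := Multiset.mem_map.mp hx
      exact GenRel.of _ _ (Or.inr ⟨bs, hb, rfl⟩)
  rw [Multiset.map_map] at hrel
  exact hrel

lemma sum_map_mprod_of_tensorRel (hS : BTrans rS) (hT : BTrans rT) {lamS : A → Multiset A}
    {lamT : B → Multiset B} (hlamS : ∀ a, IsMinLeafTuple rS (lamS a) a)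
    (hlamT : ∀ b, IsMinLeafTuple rT (lamT b) b) {gs : Multiset (A × B)} {e : A × B}
    (h : tensorRel rS rT gs e) :
    (gs.map fun g => mprod (lamS g.1) (lamT g.2)).sum = mprod (lamS e.1) (lamT e.2) := by
  refine GenRel.sum_map_eq ?_ h
  rintro _ ⟨a, b⟩ (⟨as, has, rfl⟩ | ⟨bs, hbs, rfl⟩)
  · rw [Multiset.map_map, ← hS.sum_map_minLeafTuple hlamS has, mprod_sum_map_left]
    rfl
  · rw [Multiset.map_map, ← hT.sum_map_minLeafTuple hlamT hbs, mprod_sum_map_right]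
    rfl

end Tensor

/-- For `e = (s,t) ∈ S ⊗ T`, the tuple `s^λ × t^λ` (the
product of the minimal tuples below `s` and `t`) is the minimum tuple below
`e` in `S ⊗ T`. -/
theorem stmt15 {A B : Type u} (rS : Rel A) (rT : Rel B)
    (hS : IsTree rS) (hT : IsTree rT) (s : A) (t : B)
    (slam : Multiset A) (tlam : Multiset B)
    (hsl : rS slam s ∧ ∀ gs, rS gs s → tupleLE rS slam gs)
    (htl : rT tlam t ∧ ∀ gs, rT gs t → tupleLE rT tlam gs) :
    tensorRel rS rT (mprod slam tlam) (s, t) ∧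
    ∀ gs, tensorRel rS rT gs (s, t) →
      tupleLE (tensorRel rS rT) (mprod slam tlam) gs := by
  choose lamS hlamS using hS.exists_isMinLeafTuple
  choose lamT hlamT using hT.exists_isMinLeafTuple
  have hs : slam = lamS s := tupleLE_eq_of_isLeaf (hsl.2 _ (hlamS s).1) (hlamS s).2.2
  have ht : tlam = lamT t := tupleLE_eq_of_isLeaf (htl.2 _ (hlamT t).1) (hlamT t).2.2
  refine ⟨tensorRel_mprod hsl.1 htl.1, fun gs hgs => ?_⟩
  rw [hs, ht, ← sum_map_mprod_of_tensorRel hS.1.1.2 hT.1.1.2 hlamS hlamT hgs]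
  exact tupleLE_sum_map_self fun g _ => tensorRel_mprod (hlamS g.1).1 (hlamT g.2).1

end BroadPaper
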